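/- (Reduced 2-state UPG correctness.) Work with probability vectors on 2 states {0,1}; let h = ½·δ_0 + ½·δ_1. For bits r_0, r_1, …, r_n ∈ {0,1} define Z_n(r_0; r_n, …, r_1) recursively: Z_0(r_0) = δ_{1−r_0}; for n ≥ 1, setting b_n = max(r_0, r_n): Z_n(r_0; r_n, …, r_1) = ( Z_{n−1}(r_0; r_{n−1}, …, r_1) ∗ (δ_{1−b_n} ⊕ h) ) ⊕ ( δ_{1−b_n} ∗ h ). Then for all n ≥ 0 and all bits r_0, …, r_n satisfying (r_0 = 1 → r_i = 0 for all 1 ≤ i ≤ n), the vector Z_n(r_0; r_n, …, r_1) assigns probability (r_0·2^n + ∑_{i=1}^{n} r_i·2^{i−1}) / 2^n to state 0. -/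

import Mathlib

noncomputable section

/-- Series composition: distribution of `min` of two independent states. -/
def smin {N : ℕ} (p q : Fin N → ℝ) : Fin N → ℝ :=
  fun k => ∑ i, ∑ j, if min i j = k then p i * q j else 0

/-- Parallel composition: distribution of `max` of two independent states. -/
def smax {N : ℕ} (p q : Fin N → ℝ) : Fin N → ℝ :=
  fun k => ∑ i, ∑ j, if max i j = k then p i * q j else 0

/-- The point mass at state `s`. -/
def delta {N : ℕ} (s : Fin N) : Fin N → ℝ := fun i => if i = s then 1 else 0

/-- The fair 2-state pswitch `h = ½·δ₀ + ½·δ₁`. -/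
def hB : Fin 2 → ℝ := fun i => (1 / 2) * delta (0 : Fin 2) i + (1 / 2) * delta (1 : Fin 2) i

/-- The reduced (series-parallel) 2-state UPG `Z_n(r₀; r_n, …, r₁)`:
`Z₀(r₀) = δ_{1-r₀}`; for `n ≥ 1`, with `b_n = max(r₀, r_n)`,
`Z_n = (Z_{n-1} ∗ (δ_{1-b_n} ⊕ h)) ⊕ (δ_{1-b_n} ∗ h)`. -/
def Z (r : ℕ → Fin 2) : ℕ → (Fin 2 → ℝ)
  | 0 => delta (1 - r 0)
  | n + 1 =>
    smax (smin (Z r n) (smax (delta (1 - max (r 0) (r (n + 1)))) hB))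
      (smin (delta (1 - max (r 0) (r (n + 1)))) hB)

/-!
On two states `min i j = 1` only when `i = j = 1` and `max i j = 0` only when `i = j = 0`, so
`(p ∗ q) 1 = p 1 * q 1` and `(p ⊕ q) 0 = p 0 * q 0`; since both compositions preserve total mass,
the other coordinates are `1` minus these products. This turns the recursion for
`Z` into `x_n = (b_n + x_{n-1}) / 2` for `x_n = Z_n(0)`, with `x_0 = r₀`. The hypothesis on the
bits gives `b_n = r₀ + r_n`, and unrolling this binary-digit recursion gives the closed form.
-/

section
variable {N : ℕ}

theorem sum_sum_sum_ite_eq_mul (f : Fin N → Fin N → Fin N) (p q : Fin N → ℝ) :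
    ∑ k, ∑ i, ∑ j, (if f i j = k then p i * q j else 0) = (∑ i, p i) * ∑ j, q j := by
  rw [Finset.sum_mul_sum, Finset.sum_comm]
  refine Finset.sum_congr rfl fun i _ => ?_
  rw [Finset.sum_comm]
  simp

theorem sum_smin (p q : Fin N → ℝ) : ∑ k, smin p q k = (∑ i, p i) * ∑ j, q j :=
  sum_sum_sum_ite_eq_mul min p q

theorem sum_smax (p q : Fin N → ℝ) : ∑ k, smax p q k = (∑ i, p i) * ∑ j, q j :=
  sum_sum_sum_ite_eq_mul max p q

theorem sum_delta (s : Fin N) : ∑ i, delta s i = 1 := by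
  simp [delta]

theorem smax_apply_zero (p q : Fin (N + 1) → ℝ) : smax p q 0 = p 0 * q 0 := by
  simp [smax, max_eq_zero, ite_and]

theorem smin_apply_last (p q : Fin (N + 1) → ℝ) :
    smin p q (Fin.last N) = p (Fin.last N) * q (Fin.last N) := by
  simp [smin, ← Fin.top_eq_last, ite_and]

end

section TwoStates
variable {p q : Fin 2 → ℝ}

theorem smin_apply_zero (hp : ∑ i, p i = 1) (hq : ∑ i, q i = 1) :
    smin p q 0 = 1 - p 1 * q 1 := by
  have h := sum_smin p q
  rw [hp, hq, Fin.sum_univ_two] at h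
  have h1 : smin p q 1 = p 1 * q 1 := smin_apply_last p q
  linarith

theorem smax_apply_one (hp : ∑ i, p i = 1) (hq : ∑ i, q i = 1) :
    smax p q 1 = 1 - p 0 * q 0 := by
  have h := sum_smax p q
  rw [hp, hq, Fin.sum_univ_two, smax_apply_zero] at h
  linarith

end TwoStates

theorem sum_hB : ∑ i, hB i = 1 := by
  norm_num [hB, delta]

theorem sum_Z (r : ℕ → Fin 2) (n : ℕ) : ∑ i, Z r n i = 1 := by
  induction n with
  | zero => exact sum_delta _
  | succ n ih => rw [Z, sum_smax, sum_smin, sum_smin, sum_smax, ih, sum_delta, sum_hB]; norm_num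

theorem upg_stage_apply_zero {p : Fin 2 → ℝ} (hp : ∑ i, p i = 1) (b : Fin 2) :
    smax (smin p (smax (delta (1 - b)) hB)) (smin (delta (1 - b)) hB) 0 = ((b : ℕ) + p 0) / 2 := by
  have hδ := sum_delta (1 - b)
  have hp1 : p 1 = 1 - p 0 := by rw [Fin.sum_univ_two] at hp; linarith
  have hmax : ∑ i, smax (delta (1 - b)) hB i = 1 := by rw [sum_smax, hδ, sum_hB, one_mul]
  rw [smax_apply_zero, smin_apply_zero hp hmax, smin_apply_zero hδ sum_hB,
    smax_apply_one hδ sum_hB, hp1]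
  fin_cases b <;> norm_num [delta, hB] <;> ring

theorem Z_succ_apply_zero (r : ℕ → Fin 2) (n : ℕ) :
    Z r (n + 1) 0 = ((max (r 0) (r (n + 1)) : ℕ) + Z r n 0) / 2 :=
  upg_stage_apply_zero (sum_Z r n) _

theorem Z_zero_apply_zero (r : ℕ → Fin 2) : Z r 0 0 = (r 0 : ℕ) := by
  simp only [Z, delta]
  generalize r 0 = a
  fin_cases a <;> simp

theorem Fin.val_max_eq_add_of_eq_one_imp {a c : Fin 2} (h : a = 1 → c = 0) :
    ((max a c : Fin 2) : ℕ) = a + c := by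
  fin_cases a <;> fin_cases c <;> simp_all

theorem two_pow_mul_Z_apply_zero (n : ℕ) (r : ℕ → Fin 2)
    (hr : r 0 = 1 → ∀ i, 1 ≤ i → i ≤ n → r i = 0) :
    2 ^ n * Z r n 0 =
      ((r 0 : ℕ) : ℝ) * 2 ^ n + ∑ i ∈ Finset.Icc 1 n, ((r i : ℕ) : ℝ) * 2 ^ (i - 1) := by
  induction n with
  | zero => simp [Z_zero_apply_zero]
  | succ n ih =>
    have hb : ((max (r 0) (r (n + 1)) : ℕ) : ℝ) = (r 0 : ℕ) + (r (n + 1) : ℕ) := by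
      exact_mod_cast Fin.val_max_eq_add_of_eq_one_imp fun h => hr h (n + 1) (by omega) le_rfl
    rw [Z_succ_apply_zero, hb, Finset.sum_Icc_succ_top (by omega), Nat.add_sub_cancel, pow_succ]
    linear_combination ih fun h i h1 _ => hr h i h1 (by omega)

/-- Reduced 2-state UPG correctness: with input bits `r₀, …, r_n` (where
`r₀ = 1` forces all other bits to `0`), `Z_n` assigns probability
`(r₀·2ⁿ + ∑_{i=1}^n r_i·2^{i-1})/2ⁿ` to state `0`. -/
theorem upg2_reduced (n : ℕ) (r : ℕ → Fin 2)
    (hr : r 0 = 1 → ∀ i, 1 ≤ i → i ≤ n → r i = 0) :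
    Z r n 0 =
      (((r 0 : ℕ) : ℝ) * 2 ^ n + ∑ i ∈ Finset.Icc 1 n, ((r i : ℕ) : ℝ) * 2 ^ (i - 1)) / 2 ^ n := by
  rw [← two_pow_mul_Z_apply_zero n r hr, mul_div_cancel_left₀ _ (by positivity)]
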